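/- arXiv:1908.01413 — 2 statements merged into one kernel-verified Lean document; each statement's English description precedes it below -/
import Mathlib

section
/- If a function b : ℝ^d → ℝ is λ-homogeneous with respect to two distinct points 0 and y (i.e. b(r x) = r^λ b(x) and b(y + r x) = r^λ b(y + x) for all x ∈ ℝ^d and r > 0), then b is invariant under translation by y, i.e. b(x + y) = b(x) for all x ∈ ℝ^d. -/
/-- Shrinking `x` by `1/2` towards `y` and shrinking `x + y` by `1/2` towards `0` both land on the
midpoint `(x + y) / 2`, so the two homogeneities give `(1/2)^λ b x = (1/2)^λ b (x + y)`. -/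
theorem map_add_eq_of_isHomogeneous_at_zero_and_at {E : Type*} [AddCommGroup E] [Module ℝ E]
    {lam : ℝ} {b : E → ℝ} {y : E}
    (h0 : ∀ x : E, ∀ r : ℝ, 0 < r → b (r • x) = r ^ lam * b x)
    (hy : ∀ x : E, ∀ r : ℝ, 0 < r → b (y + r • x) = r ^ lam * b (y + x)) (x : E) :
    b (x + y) = b x := by
  have hmid : y + (1 / 2 : ℝ) • (x - y) = (1 / 2 : ℝ) • (x + y) := by module
  have hscale : (1 / 2 : ℝ) ^ lam * b (x + y) = (1 / 2 : ℝ) ^ lam * b x := by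
    calc (1 / 2 : ℝ) ^ lam * b (x + y)
        = b ((1 / 2 : ℝ) • (x + y)) := (h0 _ _ one_half_pos).symm
      _ = b (y + (1 / 2 : ℝ) • (x - y)) := by rw [hmid]
      _ = (1 / 2 : ℝ) ^ lam * b x := by rw [hy _ _ one_half_pos, add_sub_cancel]
  exact mul_left_cancel₀ (Real.rpow_pos_of_pos one_half_pos lam).ne' hscale

theorem homogeneous_two_points_invariant_general
    (d : ℕ) (lam : ℝ)
    (b : EuclideanSpace ℝ (Fin d) → ℝ) (y : EuclideanSpace ℝ (Fin d))
    (h0 : ∀ x : EuclideanSpace ℝ (Fin d), ∀ r : ℝ, 0 < r →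
      b (r • x) = r ^ lam * b x)
    (hy : ∀ x : EuclideanSpace ℝ (Fin d), ∀ r : ℝ, 0 < r →
      b (y + r • x) = r ^ lam * b (y + x)) :
    ∀ x : EuclideanSpace ℝ (Fin d), b (x + y) = b x :=
  map_add_eq_of_isHomogeneous_at_zero_and_at h0 hy

/-- If `b : ℝ^d → ℝ` is `λ`-homogeneous with respect to both `0` and `y`,
then `b` is invariant under translation by `y`. -/
theorem homogeneous_two_points_invariant
    (d : ℕ) (hd : 1 ≤ d) (lam : ℝ)
    (b : EuclideanSpace ℝ (Fin d) → ℝ) (y : EuclideanSpace ℝ (Fin d))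
    (h0 : ∀ x : EuclideanSpace ℝ (Fin d), ∀ r : ℝ, 0 < r →
      b (r • x) = r ^ lam * b x)
    (hy : ∀ x : EuclideanSpace ℝ (Fin d), ∀ r : ℝ, 0 < r →
      b (y + r • x) = r ^ lam * b (y + x)) :
    ∀ x : EuclideanSpace ℝ (Fin d), b (x + y) = b x :=
  homogeneous_two_points_invariant_general d lam b y h0 hy
end

section
/- Abstract splitting lemma: Let H be a Hilbert space of functions on ℝ^d and let N(u, x, r) be a quantity satisfying: (monotonicity) r ↦ N(u,x,r) nondecreasing; (scaling) N(u_{x,r}, y, s) = N(u, x + r y, s r) where u_{x,r}(z) = c(x,r) u(x + r z) for a normalizing constant c; (continuity) (u,x) ↦ N(u,x,r) continuous in strong topology for each fixed r; (rigidity) if N(u,x,r) = λ for all r > 0 then u is λ-homogeneous about x. Suppose b is a strong limit of a blow-up sequence u_{x₀, r_n} with N(u, x₀, 0) = λ, and suppose y₀ ∈ ℝ^d is such that there exist points y_n → y₀ with N(u_{x₀,r_n}, y_n, 0) = λ. Then N(b, y₀, r) = λ for all r > 0, and consequently b(x + y₀) = b(x) for all x. -/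
open Set Filter Topology

/-!
Along the blow-up sequence, monotonicity and the frequency `λ` at the points `yₙ` give
`N(u_{x₀,rₙ}, yₙ, r) ≥ λ`, while scaling rewrites the same quantity as
`N(u, x₀ + rₙ yₙ, r rₙ) ≤ N(u, x₀ + rₙ yₙ, t)` once `r rₙ ≤ t`; letting `n → ∞` and then
`t → 0⁺` pins `N(b, y₀, r)` between `λ` and `N(u, x₀, 0⁺) = λ`. The same argument with
`yₙ = 0` shows that `b` has constant frequency `λ` about the origin too, so by rigidity `b` is
`λ`-homogeneous about both `0` and `y₀`. Comparing the two homogeneities at the midpoint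
`(x + y₀)/2` yields `b(x + y₀) = b(x)`.
-/

theorem MonotoneOn.le_of_tendsto_nhdsGT {α β : Type*} [LinearOrder α] [TopologicalSpace α]
    [OrderTopology α] [DenselyOrdered α] [NoMaxOrder α] [LinearOrder β] [TopologicalSpace β]
    [OrderClosedTopology β] {f : α → β} {a r : α} {L : β} (hf : MonotoneOn f (Ioi a))
    (hL : Tendsto f (𝓝[>] a) (𝓝 L)) (hr : a < r) : L ≤ f r := by
  refine le_of_tendsto hL ?_
  filter_upwards [Ioo_mem_nhdsGT hr] with s hs
  exact hf hs.1 (hs.1.trans hs.2) hs.2.le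

def IsHomogeneousAbout {E : Type*} [AddCommGroup E] [Module ℝ E] (f : E → ℝ) (x : E)
    (μ : ℝ) : Prop :=
  ∀ (z : E) (ρ : ℝ), 0 < ρ → f (x + ρ • z) = ρ ^ μ * f (x + z)

theorem IsHomogeneousAbout.map_add_eq {E : Type*} [AddCommGroup E] [Module ℝ E] {f : E → ℝ}
    {y : E} {μ : ℝ} (h₀ : IsHomogeneousAbout f 0 μ) (hy : IsHomogeneousAbout f y μ) (x : E) :
    f (x + y) = f x := by
  have half_pos : (0 : ℝ) < 1 / 2 := by norm_num
  have about_y : f (y + (1 / 2 : ℝ) • (x - y)) = (1 / 2 : ℝ) ^ μ * f x := by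
    simpa using hy (x - y) (1 / 2) half_pos
  have about_zero : f ((1 / 2 : ℝ) • (x + y)) = (1 / 2 : ℝ) ^ μ * f (x + y) := by
    simpa using h₀ (x + y) (1 / 2) half_pos
  have midpoint_eq : y + (1 / 2 : ℝ) • (x - y) = (1 / 2 : ℝ) • (x + y) := by module
  rw [midpoint_eq, about_zero] at about_y
  exact mul_left_cancel₀ (Real.rpow_pos_of_pos half_pos μ).ne' about_y

section Frequency

variable {H E : Type*}
  {N : H → E → ℝ → ℝ} {U : H} {bl : E → ℝ → H} {x₀ : E} {lam : ℝ}

theorem tendsto_frequency_blowup_zero [AddCommGroup E] [Module ℝ E]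
    (hscal : ∀ (x y : E) (r s : ℝ), 0 < r → 0 < s → N (bl x r) y s = N U (x + r • y) (s * r))
    (hN0 : Tendsto (N U x₀) (𝓝[>] 0) (𝓝 lam)) {r : ℝ} (hr : 0 < r) :
    Tendsto (N (bl x₀ r) 0) (𝓝[>] 0) (𝓝 lam) := by
  have hscaled : Tendsto (fun s => s * r) (𝓝[>] 0) (𝓝[>] 0) := by
    refine tendsto_nhdsWithin_of_tendsto_nhds_of_eventually_within _ ?_ ?_
    · exact ((continuous_mul_const r).tendsto' 0 0 (zero_mul r)).mono_left nhdsWithin_le_nhds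
    · filter_upwards [self_mem_nhdsWithin] with s hs using mul_pos hs hr
  refine (hN0.comp hscaled).congr' ?_
  filter_upwards [self_mem_nhdsWithin] with s hs
  simp [hscal x₀ 0 r s hr hs]

variable [TopologicalSpace H] [TopologicalSpace E] {rn : ℕ → ℝ} {b : H} {yn : ℕ → E} {y₀ : E}

theorem tendsto_frequency_blowup
    (hcont : ∀ r : ℝ, 0 < r → Continuous (fun p : H × E => N p.1 p.2 r))
    (hb : Tendsto (fun n => bl x₀ (rn n)) atTop (𝓝 b)) (hyn : Tendsto yn atTop (𝓝 y₀))
    {r : ℝ} (hr : 0 < r) :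
    Tendsto (fun n => N (bl x₀ (rn n)) (yn n) r) atTop (𝓝 (N b y₀ r)) :=
  ((hcont r hr).tendsto (b, y₀)).comp (hb.prodMk_nhds hyn)

variable [AddCommGroup E] [Module ℝ E] [ContinuousAdd E] [ContinuousSMul ℝ E]

theorem frequency_limit_le (hmono : ∀ x : E, MonotoneOn (N U x) (Ioi 0))
    (hscal : ∀ (x y : E) (r s : ℝ), 0 < r → 0 < s → N (bl x r) y s = N U (x + r • y) (s * r))
    (hcont : ∀ r : ℝ, 0 < r → Continuous (fun p : H × E => N p.1 p.2 r))
    (hrn : ∀ n, 0 < rn n) (hrn0 : Tendsto rn atTop (𝓝 0))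
    (hb : Tendsto (fun n => bl x₀ (rn n)) atTop (𝓝 b)) (hyn : Tendsto yn atTop (𝓝 y₀))
    {r t : ℝ} (hr : 0 < r) (ht : 0 < t) :
    N b y₀ r ≤ N U x₀ t := by
  have hcenters : Tendsto (fun n => x₀ + rn n • yn n) atTop (𝓝 x₀) := by
    simpa using tendsto_const_nhds.add (hrn0.smul hyn)
  have hradii : Tendsto (fun n => r * rn n) atTop (𝓝 0) := by
    simpa using hrn0.const_mul r
  refine le_of_tendsto_of_tendsto (tendsto_frequency_blowup hcont hb hyn hr)
    (((hcont t ht).tendsto (U, x₀)).comp (tendsto_const_nhds.prodMk_nhds hcenters)) ?_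
  filter_upwards [hradii.eventually (ge_mem_nhds ht)] with n hn
  rw [hscal _ _ _ _ (hrn n) hr]
  exact hmono _ (mul_pos hr (hrn n)) ht hn

theorem frequency_limit_eq (hmono : ∀ (v : H) (x : E), MonotoneOn (N v x) (Ioi 0))
    (hscal : ∀ (x y : E) (r s : ℝ), 0 < r → 0 < s → N (bl x r) y s = N U (x + r • y) (s * r))
    (hcont : ∀ r : ℝ, 0 < r → Continuous (fun p : H × E => N p.1 p.2 r))
    (hN0 : Tendsto (N U x₀) (𝓝[>] 0) (𝓝 lam))
    (hrn : ∀ n, 0 < rn n) (hrn0 : Tendsto rn atTop (𝓝 0))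
    (hb : Tendsto (fun n => bl x₀ (rn n)) atTop (𝓝 b)) (hyn : Tendsto yn atTop (𝓝 y₀))
    (hfreq : ∀ n, Tendsto (N (bl x₀ (rn n)) (yn n)) (𝓝[>] 0) (𝓝 lam))
    {r : ℝ} (hr : 0 < r) :
    N b y₀ r = lam := by
  apply le_antisymm
  · refine ge_of_tendsto hN0 ?_
    filter_upwards [self_mem_nhdsWithin] with t ht
    exact frequency_limit_le (hmono U) hscal hcont hrn hrn0 hb hyn hr ht
  · exact ge_of_tendsto (tendsto_frequency_blowup hcont hb hyn hr)
      (.of_forall fun n => (hmono _ _).le_of_tendsto_nhdsGT (hfreq n) hr)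

end Frequency

theorem abstract_splitting_lemma_general
    {H : Type*} [TopologicalSpace H] (d : ℕ) (lam : ℝ)
    (ev : H → EuclideanSpace ℝ (Fin d) → ℝ)
    (N : H → EuclideanSpace ℝ (Fin d) → ℝ → ℝ)
    (U : H) (bl : EuclideanSpace ℝ (Fin d) → ℝ → H)
    (hmono : ∀ (v : H) (x : EuclideanSpace ℝ (Fin d)), MonotoneOn (N v x) (Ioi (0 : ℝ)))
    (hscal : ∀ (x y : EuclideanSpace ℝ (Fin d)) (r s : ℝ), 0 < r → 0 < s →
      N (bl x r) y s = N U (x + r • y) (s * r))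
    (hcont : ∀ r : ℝ, 0 < r →
      Continuous (fun p : H × EuclideanSpace ℝ (Fin d) => N p.1 p.2 r))
    (hrigid : ∀ (v : H) (x : EuclideanSpace ℝ (Fin d)) (μ : ℝ),
      (∀ r : ℝ, 0 < r → N v x r = μ) →
      ∀ (z : EuclideanSpace ℝ (Fin d)) (ρ : ℝ), 0 < ρ →
        ev v (x + ρ • z) = ρ ^ μ * ev v (x + z))
    (x₀ y₀ : EuclideanSpace ℝ (Fin d))
    (hN0 : Tendsto (N U x₀) (𝓝[>] (0 : ℝ)) (𝓝 lam))
    (rn : ℕ → ℝ) (hrn : ∀ n, 0 < rn n) (hrn0 : Tendsto rn atTop (𝓝 0))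
    (b : H) (hb : Tendsto (fun n => bl x₀ (rn n)) atTop (𝓝 b))
    (yn : ℕ → EuclideanSpace ℝ (Fin d)) (hyn : Tendsto yn atTop (𝓝 y₀))
    (hfreq : ∀ n, Tendsto (N (bl x₀ (rn n)) (yn n)) (𝓝[>] (0 : ℝ)) (𝓝 lam)) :
    (∀ r : ℝ, 0 < r → N b y₀ r = lam) ∧
    (∀ x : EuclideanSpace ℝ (Fin d), ev b (x + y₀) = ev b x) := by
  have freq_y₀ : ∀ r : ℝ, 0 < r → N b y₀ r = lam := fun r hr =>
    frequency_limit_eq hmono hscal hcont hN0 hrn hrn0 hb hyn hfreq hr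
  have freq_zero : ∀ r : ℝ, 0 < r → N b 0 r = lam := fun r hr =>
    frequency_limit_eq hmono hscal hcont hN0 hrn hrn0 hb tendsto_const_nhds
      (fun n => tendsto_frequency_blowup_zero hscal hN0 (hrn n)) hr
  exact ⟨freq_y₀,
    IsHomogeneousAbout.map_add_eq (hrigid b 0 lam freq_zero) (hrigid b y₀ lam freq_y₀)⟩

/-- Abstract splitting lemma. `H` is a topological space of "functions" on `ℝ^d`,
with evaluation `ev`, a fixed solution `U`, and blow-up rescalings `bl x r`
(representing `u_{x,r}`). `N` is an Almgren-type frequency satisfying monotonicity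
in the radius, the scaling identity, joint strong continuity, and the rigidity
property (constant frequency `μ` implies `μ`-homogeneity). If `b` is a strong limit
of the blow-up sequence `bl x₀ rₙ`, `N(U, x₀, 0⁺) = λ`, and there are points
`yₙ → y₀` of frequency `λ` for `bl x₀ rₙ`, then `N(b, y₀, r) = λ` for every `r > 0`
and `b` is invariant under translation by `y₀`. -/
theorem abstract_splitting_lemma
    {H : Type*} [TopologicalSpace H] (d : ℕ) (hd : 1 ≤ d) (lam : ℝ)
    (ev : H → EuclideanSpace ℝ (Fin d) → ℝ)
    (N : H → EuclideanSpace ℝ (Fin d) → ℝ → ℝ)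
    (U : H) (bl : EuclideanSpace ℝ (Fin d) → ℝ → H)
    (hmono : ∀ (v : H) (x : EuclideanSpace ℝ (Fin d)), MonotoneOn (N v x) (Ioi (0 : ℝ)))
    (hscal : ∀ (x y : EuclideanSpace ℝ (Fin d)) (r s : ℝ), 0 < r → 0 < s →
      N (bl x r) y s = N U (x + r • y) (s * r))
    (hcont : ∀ r : ℝ, 0 < r →
      Continuous (fun p : H × EuclideanSpace ℝ (Fin d) => N p.1 p.2 r))
    (hrigid : ∀ (v : H) (x : EuclideanSpace ℝ (Fin d)) (μ : ℝ),
      (∀ r : ℝ, 0 < r → N v x r = μ) →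
      ∀ (z : EuclideanSpace ℝ (Fin d)) (ρ : ℝ), 0 < ρ →
        ev v (x + ρ • z) = ρ ^ μ * ev v (x + z))
    (x₀ y₀ : EuclideanSpace ℝ (Fin d))
    (hN0 : Tendsto (N U x₀) (𝓝[>] (0 : ℝ)) (𝓝 lam))
    (rn : ℕ → ℝ) (hrn : ∀ n, 0 < rn n) (hrn0 : Tendsto rn atTop (𝓝 0))
    (b : H) (hb : Tendsto (fun n => bl x₀ (rn n)) atTop (𝓝 b))
    (yn : ℕ → EuclideanSpace ℝ (Fin d)) (hyn : Tendsto yn atTop (𝓝 y₀))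
    (hfreq : ∀ n, Tendsto (N (bl x₀ (rn n)) (yn n)) (𝓝[>] (0 : ℝ)) (𝓝 lam)) :
    (∀ r : ℝ, 0 < r → N b y₀ r = lam) ∧
    (∀ x : EuclideanSpace ℝ (Fin d), ev b (x + y₀) = ev b x) :=
  abstract_splitting_lemma_general d lam ev N U bl hmono hscal hcont hrigid x₀ y₀ hN0 rn hrn hrn0 b
    hb yn hyn hfreq
end
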